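/- Let 𝒞 be an admissible contravariantly finite full additive subcategory of 𝒜, closed under direct summands, M an object of 𝒜 and n ≥ 0. The following are equivalent: (1) the 𝒞-proper 𝒞-dimension of M is at most n; (2) Ext^i_𝒞(M, N) = 0 for all N ∈ 𝒜 and all i ≥ n+1; (3) Ext^{n+1}_𝒞(M, N) = 0 for all N ∈ 𝒜; (4) for every left 𝒞-resolution C•_M → M, the kernel of the (−n+1)-st differential of C•_M lies in 𝒞. -/

import Mathlib

open CategoryTheory Limits

universe v u

variable {A : Type u} [Category.{v} A] [Abelian A]

/-- A complex `X` is `𝒞`-acyclic if `Hom_𝒜(C, X)` is an acyclic complex of abelian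
groups for every `C ∈ 𝒞`. -/
def CAcyclic (𝒞 : Set A) (X : CochainComplex A ℤ) : Prop :=
  ∀ C ∈ 𝒞, ∀ i : ℤ,
    (((preadditiveCoyoneda.obj (Opposite.op C)).mapHomologicalComplex
      (ComplexShape.up ℤ)).obj X).ExactAt i

/-- A chain map `f` is a `𝒞`-quasi-isomorphism if `Hom_𝒜(C, f)` is a quasi-isomorphism
for every `C ∈ 𝒞`. -/
def CQuasiIso (𝒞 : Set A) {X Y : CochainComplex A ℤ} (f : X ⟶ Y) : Prop :=
  ∀ C ∈ 𝒞, QuasiIso (((preadditiveCoyoneda.obj (Opposite.op C)).mapHomologicalComplex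
      (ComplexShape.up ℤ)).map f)

/-- A cochain complex is bounded above. -/
def BoundedAbove (X : CochainComplex A ℤ) : Prop :=
  ∃ n : ℤ, ∀ i : ℤ, n < i → IsZero (X.X i)

/-- `f : C ⟶ M` is a right `𝒞`-approximation of `M`. -/
def IsRightApprox (𝒞 : Set A) {C M : A} (f : C ⟶ M) : Prop :=
  C ∈ 𝒞 ∧ ∀ C' ∈ 𝒞, ∀ g : C' ⟶ M, ∃ h : C' ⟶ C, h ≫ f = g

/-- `𝒞` is contravariantly finite in `𝒜`: every object has a right `𝒞`-approximation. -/
def ContravariantlyFinite (𝒞 : Set A) : Prop :=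
  ∀ M : A, ∃ (C : A) (f : C ⟶ M), IsRightApprox 𝒞 f

/-- `𝒞` is admissible: every right `𝒞`-approximation is an epimorphism. -/
def Admissible (𝒞 : Set A) : Prop :=
  ∀ ⦃C M : A⦄ (f : C ⟶ M), IsRightApprox 𝒞 f → Epi f

/-- `(P, π)` is a left `𝒞`-resolution of `M`: a `Hom_𝒜(𝒞,-)`-exact augmented complex
`⋯ → P⁻¹ → P⁰ → M → 0` with all terms in `𝒞` (indexed cohomologically, concentrated
in degrees `≤ 0`). -/
def IsLeftRes (𝒞 : Set A) (M : A) (P : CochainComplex A ℤ) (π : P.X 0 ⟶ M) : Prop :=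
  (∀ i : ℤ, 0 < i → IsZero (P.X i)) ∧
  (∀ i : ℤ, i ≤ 0 → P.X i ∈ 𝒞) ∧
  P.d (-1) 0 ≫ π = 0 ∧
  ∀ C ∈ 𝒞,
    (∀ g : C ⟶ M, ∃ h : C ⟶ P.X 0, h ≫ π = g) ∧
    (∀ g : C ⟶ P.X 0, g ≫ π = 0 → ∃ h : C ⟶ P.X (-1), h ≫ P.d (-1) 0 = g) ∧
    (∀ i : ℤ, i < 0 → ∀ g : C ⟶ P.X i, g ≫ P.d i (i + 1) = 0 →
      ∃ h : C ⟶ P.X (i - 1), h ≫ P.d (i - 1) i = g)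

/-- Vanishing of `Ext^n_𝒞(M, N) = Hⁿ Hom_𝒜(P, N)` computed from a left `𝒞`-resolution
`P` of `M`: every `n`-cocycle of `Hom_𝒜(P, N)` is a coboundary. -/
def ExtVanish (P : CochainComplex A ℤ) (N : A) (n : ℤ) : Prop :=
  ∀ g : P.X (-n) ⟶ N, P.d (-n - 1) (-n) ≫ g = 0 →
    ∃ h : P.X (-n + 1) ⟶ N, P.d (-n) (-n + 1) ≫ h = g

/-- `𝒞` is closed under direct summands (hence under isomorphisms). -/
def SummandClosed (𝒞 : Set A) : Prop :=
  ∀ (X Y : A) (ι : Y ⟶ X) (r : X ⟶ Y), ι ≫ r = 𝟙 Y → X ∈ 𝒞 → Y ∈ 𝒞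

/-- The `n`-th syzygy of a left `𝒞`-resolution `(P, π)` of `M` (with the augmented
convention: the 0-th syzygy is `M` itself and the first is `Ker π`). -/
noncomputable def SyzObj {M : A} (P : CochainComplex A ℤ) (π : P.X 0 ⟶ M) : ℕ → A
  | 0 => M
  | 1 => kernel π
  | (n + 2) => kernel (P.d (-(n : ℤ) - 1) (-(n : ℤ)))

/-!
(1) ⇒ (2): comparison maps between an arbitrary left `𝒞`-resolution `P` and one of length `n`
compose to an endomorphism of `P` over `𝟙 M` that vanishes below degree `-n`; it is homotopic to
the identity, so `𝟙` is null-homotopic in those degrees and kills `Ext^i` for `i > n`.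

(3) ⇒ (4): write `Ωᵏ` for the `k`-th syzygy. If `Ext^{n+1}_𝒞(M, -) = 0`, the cocycle
`P⁻ⁿ⁻¹ ↠ Ωⁿ⁺¹` is a coboundary, which splits `Ωⁿ⁺¹ ↪ P⁻ⁿ`; hence `Ωⁿ` is a direct summand of
`P⁻ⁿ ∈ 𝒞`.

(4) ⇒ (1): resolve `M` by chosen right approximations, approximating objects of `𝒞` by their
identity. Once the `n`-th syzygy lies in `𝒞`, the next one is `0` and the resolution stops.
-/

section General

variable {𝒞 : Set A}

omit [Abelian A] in
lemma SummandClosed.mem_of_iso (hsum : SummandClosed 𝒞) {X Y : A} (e : X ≅ Y) (hX : X ∈ 𝒞) :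
    Y ∈ 𝒞 :=
  hsum X Y e.inv e.hom e.inv_hom_id hX

lemma SummandClosed.mem_of_isZero (hsum : SummandClosed 𝒞) {X Z : A} (hX : X ∈ 𝒞)
    (hZ : IsZero Z) : Z ∈ 𝒞 :=
  hsum X Z 0 0 (hZ.eq_of_src _ _) hX

lemma SummandClosed.mem_of_retraction_kernelι (hsum : SummandClosed 𝒞) {X S : A} (e : X ⟶ S)
    [Epi e] (r : X ⟶ kernel e) (hr : kernel.ι e ≫ r = 𝟙 _) (hX : X ∈ 𝒞) : S ∈ 𝒞 :=
  let σ := ShortComplex.Splitting.ofExactOfRetraction _ (ShortComplex.kernelSequence_exact e) r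
    hr ‹_›
  hsum X S σ.s e σ.s_g hX

lemma isRightApprox_kernel_lift {X Y Z : A} (hX : X ∈ 𝒞) (d : X ⟶ Y) (f : Y ⟶ Z)
    (hdf : d ≫ f = 0) (hexact : ∀ C ∈ 𝒞, ∀ g : C ⟶ Y, g ≫ f = 0 → ∃ h : C ⟶ X, h ≫ d = g) :
    IsRightApprox 𝒞 (kernel.lift f d hdf) := by
  refine ⟨hX, fun C hC g => ?_⟩
  obtain ⟨h, hh⟩ := hexact C hC (g ≫ kernel.ι f) (by simp)
  exact ⟨h, by rw [← cancel_mono (kernel.ι f), Category.assoc, kernel.lift_ι, hh]⟩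

lemma ExtVanish.exists_eq {P : CochainComplex A ℤ} {N : A} {n : ℤ} (hv : ExtVanish P N n)
    {a b c : ℤ} (hab : a + 1 = b) (hb : b = -n) (hbc : b + 1 = c) (g : P.X b ⟶ N)
    (hg : P.d a b ≫ g = 0) : ∃ h : P.X c ⟶ N, P.d b c ≫ h = g := by
  subst hb hbc
  obtain rfl : a = -n - 1 := by omega
  exact hv g hg

end General

section LeftResolution

variable {𝒞 : Set A} {M : A} {P : CochainComplex A ℤ} {π : P.X 0 ⟶ M}

lemma IsLeftRes.mem (hP : IsLeftRes 𝒞 M P π) {i : ℤ} (hi : i ≤ 0) : P.X i ∈ 𝒞 :=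
  hP.2.1 i hi

lemma IsLeftRes.d_comp_augmentation (hP : IsLeftRes 𝒞 M P π) : P.d (-1) 0 ≫ π = 0 :=
  hP.2.2.1

lemma IsLeftRes.exists_lift_augmentation (hP : IsLeftRes 𝒞 M P π) {C : A} (hC : C ∈ 𝒞)
    (g : C ⟶ M) : ∃ h : C ⟶ P.X 0, h ≫ π = g :=
  (hP.2.2.2 C hC).1 g

lemma IsLeftRes.exists_lift_of_comp_augmentation (hP : IsLeftRes 𝒞 M P π) {C : A} (hC : C ∈ 𝒞)
    (g : C ⟶ P.X 0) (hg : g ≫ π = 0) : ∃ h : C ⟶ P.X (-1), h ≫ P.d (-1) 0 = g :=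
  (hP.2.2.2 C hC).2.1 g hg

lemma IsLeftRes.exists_lift_of_comp_d (hP : IsLeftRes 𝒞 M P π) {C : A} (hC : C ∈ 𝒞)
    {i j k : ℤ} (hi : i < 0) (hij : i + 1 = j) (hki : k + 1 = i) (g : C ⟶ P.X i)
    (hg : g ≫ P.d i j = 0) : ∃ h : C ⟶ P.X k, h ≫ P.d k i = g := by
  subst hij
  obtain rfl : k = i - 1 := by omega
  exact (hP.2.2.2 C hC).2.2 i hi g hg

lemma IsLeftRes.isRightApprox_augmentation (hP : IsLeftRes 𝒞 M P π) : IsRightApprox 𝒞 π :=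
  ⟨hP.mem le_rfl, fun _ hC g => hP.exists_lift_augmentation hC g⟩

end LeftResolution

section ExtVanishing

variable {𝒞 : Set A} {M : A} {P : CochainComplex A ℤ} {π : P.X 0 ⟶ M}

theorem mem_of_extVanish_kernel (hadm : Admissible 𝒞) (hsum : SummandClosed 𝒞)
    {a b : ℤ} (hab : a + 1 = b) {S : A} (e : P.X b ⟶ S) (he : IsRightApprox 𝒞 e)
    (ha : P.X a ∈ 𝒞) (hde : P.d a b ≫ e = 0)
    (hexact : ∀ C ∈ 𝒞, ∀ g : C ⟶ P.X b, g ≫ e = 0 → ∃ h : C ⟶ P.X a, h ≫ P.d a b = g)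
    {n : ℤ} (hext : ExtVanish P (kernel e) n) (hn : a = -n) : S ∈ 𝒞 := by
  set e' := kernel.lift e (P.d a b) hde
  have := hadm e he
  have := hadm e' (isRightApprox_kernel_lift ha _ e hde hexact)
  obtain ⟨r, hr⟩ := hext.exists_eq (a := a - 1) (by omega) hn hab e'
    (by rw [← cancel_mono (kernel.ι e)]; simp [e'])
  refine hsum.mem_of_retraction_kernelι e r ?_ he.1
  rw [← cancel_epi e', ← Category.assoc, kernel.lift_ι, hr, Category.comp_id]

theorem IsLeftRes.kernel_mem_of_extVanish (hadm : Admissible 𝒞) (hsum : SummandClosed 𝒞)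
    (hP : IsLeftRes 𝒞 M P π) {a b c : ℤ} (hab : a + 1 = b) (hbc : b + 1 = c) (hb : b < 0)
    {Y : A} (f : P.X c ⟶ Y) (hf : P.d b c ≫ f = 0)
    (hexact : ∀ C ∈ 𝒞, ∀ g : C ⟶ P.X c, g ≫ f = 0 → ∃ h : C ⟶ P.X b, h ≫ P.d b c = g)
    {n : ℤ} (hext : ∀ N, ExtVanish P N n) (hn : a = -n) : kernel f ∈ 𝒞 := by
  refine mem_of_extVanish_kernel hadm hsum hab _
    (isRightApprox_kernel_lift (hP.mem hb.le) _ f hf hexact) (hP.mem (by omega))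
    (by rw [← cancel_mono (kernel.ι f)]; simp) (fun C hC g hg => ?_) (hext _) hn
  refine hP.exists_lift_of_comp_d hC hb hbc hab g ?_
  simpa using hg =≫ kernel.ι f

theorem IsLeftRes.syzObj_mem_of_extVanish (hadm : Admissible 𝒞) (hsum : SummandClosed 𝒞)
    (hP : IsLeftRes 𝒞 M P π) (n : ℕ) (hext : ∀ N, ExtVanish P N ((n : ℤ) + 1)) :
    SyzObj P π n ∈ 𝒞 :=
  match n with
  | 0 => mem_of_extVanish_kernel hadm hsum (a := -1) (by norm_num) π
      hP.isRightApprox_augmentation (hP.mem (by norm_num)) hP.d_comp_augmentation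
      (fun _ hC g hg => hP.exists_lift_of_comp_augmentation hC g hg) (hext _) (by norm_num)
  | 1 => hP.kernel_mem_of_extVanish hadm hsum (a := -2) (by norm_num) (by norm_num)
      (by norm_num) π hP.d_comp_augmentation
      (fun _ hC g hg => hP.exists_lift_of_comp_augmentation hC g hg) hext (by norm_num)
  | m + 2 => hP.kernel_mem_of_extVanish hadm hsum (a := -m - 3) (b := -m - 2) (by omega)
      (by omega) (by omega) _ (P.d_comp_d _ _ _)
      (fun _ hC g hg => hP.exists_lift_of_comp_d hC (by omega) (by omega) (by omega) g hg) hext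
      (by push_cast; ring)

end ExtVanishing

section Comparison

variable {𝒞 : Set A} {M : A} {P Q : CochainComplex A ℤ} {π : P.X 0 ⟶ M} {ρ : Q.X 0 ⟶ M}

theorem IsLeftRes.exists_comparison (hP : IsLeftRes 𝒞 M P π) (hQ : IsLeftRes 𝒞 M Q ρ) (K : ℕ) :
    ∃ u : ∀ i, P.X i ⟶ Q.X i, u 0 ≫ ρ = π ∧
      ∀ i j, i + 1 = j → -(K : ℤ) < j → j ≤ 0 → P.d i j ≫ u j = u i ≫ Q.d i j := by
  induction K with
  | zero =>
    obtain ⟨u₀, hu₀⟩ := hQ.exists_lift_augmentation (hP.mem le_rfl) π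
    exact ⟨Function.update (fun _ => 0) 0 u₀, by simpa using hu₀, fun _ _ _ _ _ => by omega⟩
  | succ K ih =>
    obtain ⟨u, hu₀, hu⟩ := ih
    obtain ⟨v, hv⟩ : ∃ v : P.X (-K - 1) ⟶ Q.X (-K - 1),
        v ≫ Q.d (-K - 1) (-K) = P.d (-K - 1) (-K) ≫ u (-K) := by
      rcases Nat.eq_zero_or_pos K with rfl | hK
      · show ∃ v : P.X (-1) ⟶ Q.X (-1), v ≫ Q.d (-1) 0 = P.d (-1) 0 ≫ u 0
        refine hQ.exists_lift_of_comp_augmentation (hP.mem (by norm_num)) _ ?_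
        rw [Category.assoc, hu₀, hP.d_comp_augmentation]
      · refine hQ.exists_lift_of_comp_d (hP.mem (by omega)) (by omega) rfl (by ring) _ ?_
        rw [Category.assoc, ← hu _ _ rfl (by omega) (by omega), ← Category.assoc,
          P.d_comp_d, zero_comp]
    refine ⟨Function.update u (-K - 1) v, ?_, fun i j hij hj hj₀ => ?_⟩
    · rwa [Function.update_of_ne (by omega)]
    · rw [Function.update_of_ne (by omega : j ≠ -K - 1)]
      rcases eq_or_ne i (-K - 1) with rfl | hi
      · obtain rfl : j = -K := by omega
        rw [Function.update_self, hv]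
      · rw [Function.update_of_ne hi]
        exact hu i j hij (by omega) hj₀

theorem IsLeftRes.exists_nullHomotopy (hQ : IsLeftRes 𝒞 M Q ρ) (hP : ∀ i ≤ 0, P.X i ∈ 𝒞)
    (w : ∀ i, P.X i ⟶ Q.X i) (hw₀ : w 0 ≫ ρ = 0) (K : ℕ)
    (hw : ∀ i j, i + 1 = j → -(K : ℤ) < j → j ≤ 0 → P.d i j ≫ w j = w i ≫ Q.d i j) :
    ∃ s : ∀ a b, P.X a ⟶ Q.X b, ∀ i j k, i + 1 = j → j + 1 = k → -(K : ℤ) ≤ j → j ≤ 0 →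
      w j = s j i ≫ Q.d i j + P.d j k ≫ s k j := by
  induction K with
  | zero =>
    obtain ⟨t, ht⟩ := hQ.exists_lift_of_comp_augmentation (hP 0 le_rfl) (w 0) hw₀
    refine ⟨Function.update (fun _ _ => 0) 0 (Function.update (fun _ => 0) (-1) t),
      fun i j k hij hjk hj hj₀ => ?_⟩
    obtain rfl : j = 0 := by omega
    obtain rfl : i = -1 := by omega
    rw [Function.update_self, Function.update_self, ht, Function.update_of_ne (by omega)]
    simp
  | succ K ih =>
    obtain ⟨s, hs⟩ := ih fun i j hij hj hj₀ => hw i j hij (by omega) hj₀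
    set γ := w (-K - 1) - P.d (-K - 1) (-K) ≫ s (-K) (-K - 1)
    have hγ : γ ≫ Q.d (-K - 1) (-K) = 0 := by
      have hK := hs (-K - 1) (-K) (-K + 1) (by ring) rfl le_rfl (by omega)
      rw [Preadditive.sub_comp, ← hw _ _ (by ring) (by omega) (by omega), Category.assoc, hK,
        Preadditive.comp_add, ← Category.assoc (P.d _ _) (P.d _ _), P.d_comp_d, zero_comp,
        add_zero, sub_self]
    obtain ⟨t, ht⟩ := hQ.exists_lift_of_comp_d (hP _ (by omega)) (by omega) (by ring)
      (k := -K - 2) (by ring) γ hγ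
    refine ⟨Function.update s (-K - 1) (Function.update (s (-K - 1)) (-K - 2) t),
      fun i j k hij hjk hj hj₀ => ?_⟩
    rw [Function.update_of_ne (by omega : k ≠ -K - 1)]
    rcases eq_or_ne j (-K - 1) with rfl | hj'
    · obtain rfl : i = -K - 2 := by omega
      obtain rfl : k = -K := by omega
      rw [Function.update_self, Function.update_self, ht, sub_add_cancel]
    · rw [Function.update_of_ne hj']
      exact hs i j k hij hjk (by omega) hj₀

theorem IsLeftRes.extVanish_of_isZero (hP : IsLeftRes 𝒞 M P π) (hQ : IsLeftRes 𝒞 M Q ρ)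
    {i : ℤ} (hi : 0 < i) (hQi : IsZero (Q.X (-i))) (N : A) : ExtVanish P N i := by
  obtain ⟨u, hu₀, hu⟩ := hP.exists_comparison hQ (i.toNat + 1)
  obtain ⟨v, hv₀, hv⟩ := hQ.exists_comparison hP (i.toNat + 1)
  obtain ⟨s, hs⟩ := hP.exists_nullHomotopy (fun _ h => hP.mem h) (fun j => 𝟙 _ - u j ≫ v j)
    (by simp [hv₀, hu₀]) i.toNat fun a b hab hb hb₀ => by
      simp only [Preadditive.comp_sub, Preadditive.sub_comp, Category.comp_id, Category.id_comp,
        Category.assoc, ← hv a b hab (by omega) hb₀]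
      rw [← reassoc_of% (hu a b hab (by omega) hb₀)]
  have hsplit := hs (-i - 1) (-i) (-i + 1) (by ring) rfl (by omega) (by omega)
  rw [hQi.eq_of_tgt (u (-i)) 0, zero_comp, sub_zero] at hsplit
  intro g hg
  refine ⟨s (-i + 1) (-i) ≫ g, ?_⟩
  calc P.d (-i) (-i + 1) ≫ s (-i + 1) (-i) ≫ g
      = (s (-i) (-i - 1) ≫ P.d (-i - 1) (-i) + P.d (-i) (-i + 1) ≫ s (-i + 1) (-i)) ≫ g := by
        simp [hg]
    _ = g := by rw [← hsplit, Category.id_comp]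

end Comparison

section Extend

variable {𝒞 : Set A} {M : A}

open ComplexShape in
theorem isLeftRes_extend (hsum : SummandClosed 𝒞) (K : ChainComplex A ℕ) (f : K.X 0 ⟶ M)
    (hX : ∀ k, K.X k ∈ 𝒞) (hf : IsRightApprox 𝒞 f) (hdf : K.d 1 0 ≫ f = 0)
    (h₀ : ∀ C ∈ 𝒞, ∀ g : C ⟶ K.X 0, g ≫ f = 0 → ∃ h : C ⟶ K.X 1, h ≫ K.d 1 0 = g)
    (hsucc : ∀ C ∈ 𝒞, ∀ k, ∀ g : C ⟶ K.X (k + 1), g ≫ K.d (k + 1) k = 0 →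
      ∃ h : C ⟶ K.X (k + 2), h ≫ K.d (k + 2) (k + 1) = g) :
    IsLeftRes 𝒞 M (K.extend (embeddingUpIntLE 0))
      ((K.extendXIso (embeddingUpIntLE 0) (i' := 0) (i := 0) (by simp)).hom ≫ f) := by
  have he : ∀ {k : ℕ} {i : ℤ}, i = -k → (embeddingUpIntLE 0).f k = i := fun h => by simp [h]
  have hd₁₀ := K.extend_d_eq (embeddingUpIntLE 0) (he (k := 1) (i := -1) (by simp))
    (he (k := 0) (i := 0) (by simp))
  refine ⟨fun i hi => K.isZero_extend_X _ i fun k => by simp; omega,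
    fun i hi => hsum.mem_of_iso (K.extendXIso _ (he (k := (-i).toNat) (by omega))).symm (hX _),
    by simp [hd₁₀, hdf], fun C hC => ⟨fun g => ?_, fun g hg => ?_, fun i hi g hg => ?_⟩⟩
  · obtain ⟨h, hh⟩ := hf.2 C hC g
    exact ⟨h ≫ (K.extendXIso _ (he (k := 0) (i := 0) (by simp))).inv, by simpa using hh⟩
  · obtain ⟨h, hh⟩ := h₀ C hC (g ≫ (K.extendXIso _ (he (k := 0) (i := 0) (by simp))).hom)
      (by simpa using hg)
    exact ⟨h ≫ (K.extendXIso _ (he (by simp))).inv, by simp [hd₁₀, reassoc_of% hh]⟩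
  · obtain ⟨k, rfl⟩ : ∃ k : ℕ, i = -((k + 1 : ℕ) : ℤ) := ⟨(-i - 1).toNat, by omega⟩
    have hk : (embeddingUpIntLE 0).f k = -((k + 1 : ℕ) : ℤ) + 1 := he (by push_cast; ring)
    rw [K.extend_d_eq _ (he rfl) hk] at hg
    obtain ⟨h, hh⟩ := hsucc C hC k (g ≫ (K.extendXIso _ (he rfl)).hom) (by
      rw [← cancel_mono (K.extendXIso _ hk).inv]
      simpa using hg)
    have hk₂ : (embeddingUpIntLE 0).f (k + 2) = -((k + 1 : ℕ) : ℤ) - 1 := he (by push_cast; ring)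
    refine ⟨h ≫ (K.extendXIso _ hk₂).inv, ?_⟩
    rw [K.extend_d_eq _ hk₂ (he rfl)]
    simp [reassoc_of% hh]

end Extend

section ApproxResolution

open ComplexShape

variable {𝒞 : Set A} (hcf : ContravariantlyFinite 𝒞)

open Classical in
noncomputable def approx (K : A) : Σ C : A, C ⟶ K :=
  if K ∈ 𝒞 then ⟨K, 𝟙 K⟩ else ⟨(hcf K).choose, (hcf K).choose_spec.choose⟩

omit [Abelian A] in
lemma approx_of_mem {K : A} (hK : K ∈ 𝒞) : approx hcf K = ⟨K, 𝟙 K⟩ :=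
  if_pos hK

omit [Abelian A] in
lemma isRightApprox_approx (K : A) : IsRightApprox 𝒞 (approx hcf K).2 := by
  by_cases hK : K ∈ 𝒞
  · rw [approx_of_mem hcf hK]
    exact ⟨hK, fun _ _ g => ⟨g, Category.comp_id g⟩⟩
  · rw [approx, if_neg hK]
    exact (hcf K).choose_spec.choose_spec

omit [Abelian A] in
lemma isIso_approx {K : A} (hK : K ∈ 𝒞) : IsIso (approx hcf K).2 := by
  rw [approx_of_mem hcf hK]
  infer_instance

noncomputable def approxComplex (M : A) : ChainComplex A ℕ :=
  ChainComplex.mk' (approx hcf M).1 (approx hcf (kernel (approx hcf M).2)).1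
    ((approx hcf _).2 ≫ kernel.ι _)
    fun f => ⟨(approx hcf (kernel f)).1, (approx hcf (kernel f)).2 ≫ kernel.ι f, by simp⟩

variable (M : A)

noncomputable def approxTarget : ℕ → A
  | 0 => M
  | k + 1 => (approxComplex hcf M).X k

-- The differential of the complex augmented by `M`.
noncomputable def approxAugD : ∀ k, (approxComplex hcf M).X k ⟶ approxTarget hcf M k
  | 0 => (approx hcf M).2
  | k + 1 => (approxComplex hcf M).d (k + 1) k

-- `approxSyz k` is the object whose chosen approximation is the `k`-th term of the complex.
noncomputable def approxSyz : ℕ → A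
  | 0 => M
  | k + 1 => kernel (approxAugD hcf M k)

noncomputable def approxSyzι : ∀ k, approxSyz hcf M k ⟶ approxTarget hcf M k
  | 0 => 𝟙 M
  | k + 1 => kernel.ι (approxAugD hcf M k)

instance : ∀ k, Mono (approxSyzι hcf M k)
  | 0 => inferInstanceAs (Mono (𝟙 M))
  | k + 1 => inferInstanceAs (Mono (kernel.ι (approxAugD hcf M k)))

noncomputable def approxComplexXIso :
    ∀ k, (approxComplex hcf M).X k ≅ (approx hcf (approxSyz hcf M k)).1
  | 0 => Iso.refl _
  | 1 => Iso.refl _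
  | k + 2 => ChainComplex.mk'XIso _ _ _ _ k

lemma approxAugD_eq (k : ℕ) : approxAugD hcf M k = (approxComplexXIso hcf M k).hom ≫
    (approx hcf (approxSyz hcf M k)).2 ≫ approxSyzι hcf M k := by
  match k with
  | 0 => exact (Category.comp_id _).symm.trans (Category.id_comp _).symm
  | 1 => exact (ChainComplex.mk'_d_1_0 _ _ _ _).trans (Category.id_comp _).symm
  | k + 2 => exact ChainComplex.mk'_d _ _ _ _ k

lemma approxComplex_X_mem (hsum : SummandClosed 𝒞) (k : ℕ) : (approxComplex hcf M).X k ∈ 𝒞 :=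
  hsum.mem_of_iso (approxComplexXIso hcf M k).symm (isRightApprox_approx hcf _).1

lemma approxAugD_comp (k : ℕ) :
    (approxComplex hcf M).d (k + 1) k ≫ approxAugD hcf M k = 0 := by
  cases k with
  | zero =>
    refine (ChainComplex.mk'_d_1_0 _ _ _ _ =≫ (approx hcf M).2).trans ?_
    exact (Category.assoc _ _ _).trans ((_ ≫= kernel.condition _).trans comp_zero)
  | succ k => exact (approxComplex hcf M).d_comp_d _ _ _

lemma exists_lift_of_comp_approxAugD {C : A} (hC : C ∈ 𝒞) (k : ℕ)
    (g : C ⟶ (approxComplex hcf M).X k) (hg : g ≫ approxAugD hcf M k = 0) :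
    ∃ h : C ⟶ (approxComplex hcf M).X (k + 1), h ≫ (approxComplex hcf M).d (k + 1) k = g := by
  obtain ⟨t, ht⟩ := (isRightApprox_approx hcf (approxSyz hcf M (k + 1))).2 C hC
    (kernel.lift _ g hg)
  refine ⟨t ≫ (approxComplexXIso hcf M (k + 1)).inv, ?_⟩
  change _ ≫ approxAugD hcf M (k + 1) = g
  rw [approxAugD_eq, Category.assoc, Iso.inv_hom_id_assoc, reassoc_of% ht]
  exact kernel.lift_ι _ _ _

lemma isZero_approxSyz_succ {k : ℕ} (hk : approxSyz hcf M k ∈ 𝒞) :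
    IsZero (approxSyz hcf M (k + 1)) := by
  have := isIso_approx hcf hk
  have : Mono (approxAugD hcf M k) := by
    rw [approxAugD_eq]
    infer_instance
  exact isZero_kernel_of_mono _

lemma isZero_approxComplex_X (hsum : SummandClosed 𝒞) {k : ℕ}
    (hk : IsZero (approxSyz hcf M k)) : IsZero ((approxComplex hcf M).X k) := by
  have := isIso_approx hcf (hsum.mem_of_isZero (isRightApprox_approx hcf M).1 hk)
  exact hk.of_iso (approxComplexXIso hcf M k ≪≫ asIso (approx hcf (approxSyz hcf M k)).2)

lemma isZero_approxComplex_X_of_mem (hsum : SummandClosed 𝒞) {n : ℕ}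
    (hn : approxSyz hcf M n ∈ 𝒞) {k : ℕ} (hk : n < k) :
    IsZero ((approxComplex hcf M).X k) := by
  obtain ⟨j, rfl⟩ := Nat.exists_eq_add_of_lt hk
  refine isZero_approxComplex_X hcf M hsum ?_
  induction j with
  | zero => exact isZero_approxSyz_succ hcf M hn
  | succ j ih =>
    rw [show n + (j + 1) + 1 = n + j + 1 + 1 by omega]
    exact isZero_approxSyz_succ hcf M
      (hsum.mem_of_isZero (isRightApprox_approx hcf M).1 (ih (by omega)))

noncomputable def approxResolution : CochainComplex A ℤ :=
  (approxComplex hcf M).extend (embeddingUpIntLE 0)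

noncomputable def approxAugmentation : (approxResolution hcf M).X 0 ⟶ M :=
  ((approxComplex hcf M).extendXIso _ (i' := 0) (i := 0) (by simp)).hom ≫ (approx hcf M).2

theorem isLeftRes_approxResolution (hsum : SummandClosed 𝒞) :
    IsLeftRes 𝒞 M (approxResolution hcf M) (approxAugmentation hcf M) :=
  isLeftRes_extend hsum _ _ (approxComplex_X_mem hcf M hsum) (isRightApprox_approx hcf M)
    (approxAugD_comp hcf M 0) (fun _ hC g hg => exists_lift_of_comp_approxAugD hcf M hC 0 g hg)
    fun _ hC k g hg => exists_lift_of_comp_approxAugD hcf M hC (k + 1) g hg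

lemma approxSyz_mem_of_syzObj_mem (hsum : SummandClosed 𝒞) :
    ∀ n, SyzObj (approxResolution hcf M) (approxAugmentation hcf M) n ∈ 𝒞 →
      approxSyz hcf M n ∈ 𝒞
  | 0, h => h
  | 1, h => hsum.mem_of_iso (kernelIsIsoComp
      ((approxComplex hcf M).extendXIso _ (i' := 0) (i := 0) (by simp)).hom
      (approxAugD hcf M 0)) h
  | m + 2, h => by
    have hd := (approxComplex hcf M).extend_d_eq (embeddingUpIntLE 0) (i := m + 1) (j := m)
      (i' := -(m : ℤ) - 1) (j' := -(m : ℤ)) (by simp; ring) (by simp)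
    exact hsum.mem_of_iso (kernelIsoOfEq hd ≪≫ kernelIsIsoComp _ _ ≪≫ kernelCompMono _ _) h

end ApproxResolution

theorem exists_isLeftRes_isZero_of_syzObj_mem {𝒞 : Set A} (hcf : ContravariantlyFinite 𝒞)
    (hsum : SummandClosed 𝒞) (M : A) (n : ℕ)
    (h : ∀ (P : CochainComplex A ℤ) (π : P.X 0 ⟶ M), IsLeftRes 𝒞 M P π → SyzObj P π n ∈ 𝒞) :
    ∃ (P : CochainComplex A ℤ) (π : P.X 0 ⟶ M), IsLeftRes 𝒞 M P π ∧
      ∀ i : ℤ, i < -(n : ℤ) → IsZero (P.X i) := by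
  have hP := isLeftRes_approxResolution hcf M hsum
  have hn := approxSyz_mem_of_syzObj_mem hcf M hsum n (h _ _ hP)
  refine ⟨_, _, hP, fun i hi => ?_⟩
  exact (isZero_approxComplex_X_of_mem hcf M hsum hn (k := (-i).toNat) (by omega)).of_iso
    ((approxComplex hcf M).extendXIso _ (by simp; omega))

theorem stmt11 (𝒞 : Set A) (hcf : ContravariantlyFinite 𝒞) (hadm : Admissible 𝒞)
    (hsum : SummandClosed 𝒞) (M : A) (n : ℕ) :
    [ -- (1) the 𝒞-proper 𝒞-dimension of M is at most n
      ∃ (P : CochainComplex A ℤ) (π : P.X 0 ⟶ M), IsLeftRes 𝒞 M P π ∧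
        ∀ i : ℤ, i < -(n : ℤ) → IsZero (P.X i),
      -- (2) Ext^i_𝒞(M, N) = 0 for all N and i ≥ n + 1
      ∀ (P : CochainComplex A ℤ) (π : P.X 0 ⟶ M), IsLeftRes 𝒞 M P π →
        ∀ N : A, ∀ i : ℤ, (n : ℤ) + 1 ≤ i → ExtVanish P N i,
      -- (3) Ext^{n+1}_𝒞(M, N) = 0 for all N
      ∀ (P : CochainComplex A ℤ) (π : P.X 0 ⟶ M), IsLeftRes 𝒞 M P π →
        ∀ N : A, ExtVanish P N ((n : ℤ) + 1),
      -- (4) for every left 𝒞-resolution, the n-th syzygy (the kernel of the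
      -- (-n+1)-st differential of the augmented resolution) lies in 𝒞
      ∀ (P : CochainComplex A ℤ) (π : P.X 0 ⟶ M), IsLeftRes 𝒞 M P π →
        SyzObj P π n ∈ 𝒞 ].TFAE := by
  tfae_have 1 → 2 := fun ⟨_, _, hQ, hQn⟩ _ _ hP N _ hi =>
    hP.extVanish_of_isZero hQ (by omega) (hQn _ (by omega)) N
  tfae_have 2 → 3 := fun h P π hP N => h P π hP N _ le_rfl
  tfae_have 3 → 4 := fun h P π hP => hP.syzObj_mem_of_extVanish hadm hsum n (h P π hP)
  tfae_have 4 → 1 := exists_isLeftRes_isZero_of_syzObj_mem hcf hsum M n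
  tfae_finish
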